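/- Let F(t) := ∫_0^t (λ'(s))² ds, where λ solves the IVP λ'(t) = e^{-λ(t)} Σ_{k=0}^{Δ-1} (λ(t)^k/k!) q_{k+1}, λ(0)=0. Then F is continuous, strictly increasing on ℝ≥0, F(0)=0, and lim_{t→∞} F(t) = E(D) = Σ_{k=2}^Δ k·p_k. Consequently F has an inverse F^{-1} : [0, E(D)) → ℝ≥0 which is continuous, strictly increasing, and satisfies F^{-1}(s) → ∞ as s → E(D). -/

import Mathlib

open Filter MeasureTheory

/-!
Put `c k = q (k + 1)` and `G x = ∑_{k<Δ} c k · P(Poisson(x) > k)`. Then `G' x = e^{-x} ∑_{k<Δ} x^k/k! c k`,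
so the ODE reads `λ' = G' ∘ λ` and `(G ∘ λ)' = λ'²`: hence `F = G ∘ λ` on `[0, ∞)`.
Since `λ' = q 1 = 1` wherever `λ = 0`, `λ` stays nonnegative, so `λ' > 0` and `e^λ λ' ≥ 1`, which
forces `e^{λ t} ≥ 1 + t` and `λ → ∞`. Thus `F` increases strictly to `G(∞) = ∑_{k<Δ} q (k + 1) = E(D)`
(tail-sum formula), and its inverse on `[0, E(D))` is continuous because its image `[0, ∞)` has no gaps.
-/

open Real Set
open scoped Nat Topology

noncomputable def poissonCDF (k : ℕ) (x : ℝ) : ℝ :=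
  exp (-x) * ∑ j ∈ Finset.range (k + 1), x ^ j / j !

theorem poissonCDF_zero_right (k : ℕ) : poissonCDF k 0 = 1 := by
  simp [poissonCDF, Finset.sum_range_succ']

theorem hasDerivAt_poissonCDF (k : ℕ) (x : ℝ) :
    HasDerivAt (poissonCDF k) (-(exp (-x) * (x ^ k / k !))) x := by
  induction k with
  | zero =>
    have h : poissonCDF 0 = fun y => exp (-y) := by ext y; simp [poissonCDF]
    simpa [h] using (hasDerivAt_neg x).exp
  | succ k ih =>
    have hsplit : poissonCDF (k + 1) =
        fun y => poissonCDF k y + exp (-y) * (y ^ (k + 1) / (k + 1)!) := by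
      ext y
      rw [poissonCDF, poissonCDF, Finset.sum_range_succ, mul_add]
    have hterm := ((hasDerivAt_neg x).exp).fun_mul
      ((hasDerivAt_pow (k + 1) x).div_const ((k + 1)! : ℝ))
    rw [hsplit]
    refine (ih.add hterm).congr_deriv ?_
    rw [Nat.factorial_succ]
    push_cast
    field_simp
    ring

theorem tendsto_poissonCDF_atTop (k : ℕ) : Tendsto (poissonCDF k) atTop (𝓝 0) := by
  have hterm : ∀ j ∈ Finset.range (k + 1),
      Tendsto (fun x => x ^ j * exp (-x) / j !) atTop (𝓝 0) := fun j _ => by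
    simpa using (tendsto_pow_mul_exp_neg_atTop_nhds_zero j).div_const (j ! : ℝ)
  convert tendsto_finsetSum _ hterm using 1
  · ext x
    rw [poissonCDF, Finset.mul_sum]
    exact Finset.sum_congr rfl fun j _ => by ring
  · simp

noncomputable def poissonWeightedSum (n : ℕ) (c : ℕ → ℝ) (x : ℝ) : ℝ :=
  exp (-x) * ∑ k ∈ Finset.range n, x ^ k / k ! * c k

noncomputable def poissonTailSum (n : ℕ) (c : ℕ → ℝ) (x : ℝ) : ℝ :=
  ∑ k ∈ Finset.range n, c k * (1 - poissonCDF k x)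

section PoissonSums

variable {n : ℕ} {c : ℕ → ℝ}

theorem continuous_poissonWeightedSum : Continuous (poissonWeightedSum n c) := by
  unfold poissonWeightedSum
  fun_prop

theorem poissonWeightedSum_zero_right (hn : 0 < n) : poissonWeightedSum n c 0 = c 0 := by
  obtain ⟨m, rfl⟩ := Nat.exists_eq_add_of_lt hn
  simp [poissonWeightedSum, Finset.sum_range_succ']

theorem le_exp_mul_poissonWeightedSum (hn : 0 < n) (hc : ∀ k, 0 ≤ c k) {x : ℝ} (hx : 0 ≤ x) :
    c 0 ≤ exp x * poissonWeightedSum n c x := by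
  rw [poissonWeightedSum, ← mul_assoc, ← exp_add, add_neg_cancel, exp_zero, one_mul]
  simpa using Finset.single_le_sum (fun k _ => by have := hc k; positivity)
    (Finset.mem_range.2 hn) (f := fun k => x ^ k / k ! * c k)

theorem poissonWeightedSum_pos (hn : 0 < n) (hc : ∀ k, 0 ≤ c k) (hc0 : 0 < c 0) {x : ℝ}
    (hx : 0 ≤ x) : 0 < poissonWeightedSum n c x :=
  pos_of_mul_pos_right ((hc0.trans_le (le_exp_mul_poissonWeightedSum hn hc hx))) (exp_pos x).le

theorem hasDerivAt_poissonTailSum (x : ℝ) :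
    HasDerivAt (poissonTailSum n c) (poissonWeightedSum n c x) x := by
  have h := HasDerivAt.fun_sum fun k (_ : k ∈ Finset.range n) =>
    ((hasDerivAt_const x 1).sub (hasDerivAt_poissonCDF k x)).const_mul (c k)
  refine h.congr_deriv ?_
  rw [poissonWeightedSum, Finset.mul_sum]
  exact Finset.sum_congr rfl fun k _ => by ring

theorem continuous_poissonTailSum : Continuous (poissonTailSum n c) := by
  unfold poissonTailSum poissonCDF
  fun_prop

theorem poissonTailSum_zero_right : poissonTailSum n c 0 = 0 := by
  simp [poissonTailSum, poissonCDF_zero_right]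

theorem tendsto_poissonTailSum_atTop :
    Tendsto (poissonTailSum n c) atTop (𝓝 (∑ k ∈ Finset.range n, c k)) := by
  have h := tendsto_finsetSum (Finset.range n) fun k (_ : k ∈ Finset.range n) =>
    ((tendsto_poissonCDF_atTop k).const_sub 1).const_mul (c k)
  simp only [sub_zero, mul_one] at h
  exact h

end PoissonSums

section AutonomousODE

variable {f f' : ℝ → ℝ} {a : ℝ}

theorem nonneg_of_hasDerivAt_of_pos_at_zeros (hf : ∀ t ∈ Ici a, HasDerivAt f (f' t) t)
    (ha : 0 ≤ f a) (hzero : ∀ t ∈ Ici a, f t = 0 → 0 < f' t) : ∀ t ∈ Ici a, 0 ≤ f t := by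
  intro b hb
  have hIcc : ∀ t ∈ Icc a b, t ∈ Ici a := fun t ht => ht.1
  have hIco : ∀ t ∈ Ico a b, t ∈ Ici a := fun t ht => ht.1
  have := image_le_of_deriv_right_lt_deriv_boundary' (f := fun t => -f t) (f' := fun t => -f' t)
    (B := fun _ => 0) (B' := fun _ => 0)
    (fun t ht => (hf t (hIcc t ht)).continuousAt.neg.continuousWithinAt)
    (fun t ht => (hf t (hIco t ht)).neg.hasDerivWithinAt) (by simpa using ha)
    continuousOn_const (fun _ _ => hasDerivWithinAt_const _ _ _)
    (fun t ht h => by simpa using hzero t (hIco t ht) (neg_eq_zero.1 h))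
    ⟨hb, le_rfl⟩
  simpa using this

theorem tendsto_atTop_of_le_exp_mul_deriv {C : ℝ} (hC : 0 < C)
    (hf : ∀ t ∈ Ici a, HasDerivAt f (f' t) t) (hbound : ∀ t ∈ Ici a, C ≤ exp (f t) * f' t) :
    Tendsto f atTop atTop := by
  have hexp : ∀ t ∈ Ici a, HasDerivAt (fun s => exp (f s)) (exp (f t) * f' t) t :=
    fun t ht => (hf t ht).exp
  have hgrowth := (convex_Ici a).mul_sub_le_image_sub_of_le_deriv
    (fun t ht => (hexp t ht).continuousAt.continuousWithinAt)
    (fun t ht => (hexp t (interior_subset ht)).differentiableAt.differentiableWithinAt)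
    (fun t ht => by rw [(hexp t (interior_subset ht)).deriv]; exact hbound t (interior_subset ht))
    a self_mem_Ici
  refine tendsto_exp_comp_atTop.1 (tendsto_atTop_mono' atTop ?_
    (tendsto_atTop_add_const_right atTop (exp (f a) - C * a) (tendsto_id.const_mul_atTop hC)))
  filter_upwards [eventually_ge_atTop a] with t ht
  rw [id_eq]
  linarith [hgrowth t ht ht]

variable {g G : ℝ → ℝ}

theorem hasDerivAt_comp_of_autonomous (hG : ∀ x, HasDerivAt G (g x) x)
    (hf : ∀ t, HasDerivAt f (f' t) t) (hode : ∀ t, f' t = g (f t)) (t : ℝ) :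
    HasDerivAt (G ∘ f) (f' t ^ 2) t :=
  ((hG (f t)).comp t (hf t)).congr_deriv (by rw [← hode, sq])

theorem integral_sq_deriv_of_autonomous (hG : ∀ x, HasDerivAt G (g x) x) (hg : Continuous g)
    (hf : ∀ t, HasDerivAt f (f' t) t) (hode : ∀ t, f' t = g (f t)) (a b : ℝ) :
    ∫ t in a..b, f' t ^ 2 = G (f b) - G (f a) := by
  have hf'c : Continuous f' := by
    rw [funext hode]
    exact hg.comp (continuous_iff_continuousAt.2 fun t => (hf t).continuousAt)
  exact intervalIntegral.integral_eq_sub_of_hasDerivAt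
    (fun t _ => hasDerivAt_comp_of_autonomous hG hf hode t) ((hf'c.pow 2).intervalIntegrable a b)

end AutonomousODE

section PoissonODE

variable {n : ℕ} {c : ℕ → ℝ} {lam lam' : ℝ → ℝ}

theorem nonneg_of_poissonODE (hn : 0 < n) (hc0 : 0 < c 0)
    (hode : ∀ t, HasDerivAt lam (lam' t) t) (hode' : ∀ t, lam' t = poissonWeightedSum n c (lam t))
    (hlam0 : 0 ≤ lam 0) : ∀ t ∈ Ici 0, 0 ≤ lam t :=
  nonneg_of_hasDerivAt_of_pos_at_zeros (fun t _ => hode t) hlam0 fun t _ h => by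
    rwa [hode', h, poissonWeightedSum_zero_right hn]

theorem strictMonoOn_poissonTailSum_comp (hn : 0 < n) (hc : ∀ k, 0 ≤ c k) (hc0 : 0 < c 0)
    (hode : ∀ t, HasDerivAt lam (lam' t) t) (hode' : ∀ t, lam' t = poissonWeightedSum n c (lam t))
    (hlam0 : 0 ≤ lam 0) : StrictMonoOn (poissonTailSum n c ∘ lam) (Ici 0) := by
  have hG := hasDerivAt_comp_of_autonomous (fun x => hasDerivAt_poissonTailSum x) hode hode'
  refine strictMonoOn_of_hasDerivWithinAt_pos (convex_Ici 0)
    (fun t _ => (hG t).continuousAt.continuousWithinAt) (fun t _ => (hG t).hasDerivWithinAt)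
    fun t ht => ?_
  rw [hode']
  exact pow_pos (poissonWeightedSum_pos hn hc hc0
    (nonneg_of_poissonODE hn hc0 hode hode' hlam0 t (interior_subset ht))) 2

theorem tendsto_atTop_of_poissonODE (hn : 0 < n) (hc : ∀ k, 0 ≤ c k) (hc0 : 0 < c 0)
    (hode : ∀ t, HasDerivAt lam (lam' t) t) (hode' : ∀ t, lam' t = poissonWeightedSum n c (lam t))
    (hlam0 : 0 ≤ lam 0) : Tendsto lam atTop atTop :=
  tendsto_atTop_of_le_exp_mul_deriv hc0 (fun t _ => hode t) fun t ht => by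
    rw [hode']
    exact le_exp_mul_poissonWeightedSum hn hc (nonneg_of_poissonODE hn hc0 hode hode' hlam0 t ht)

end PoissonODE

theorem StrictMonoOn.continuousOn_Ico_of_image_eq_Ici {g : ℝ → ℝ} {a b E : ℝ}
    (hg : StrictMonoOn g (Ico b E)) (himg : g '' Ico b E = Ici a) : ContinuousOn g (Ico b E) := by
  intro y hy
  have hga : ∀ z ∈ Ico b E, a ≤ g z := fun z hz => (himg ▸ mem_image_of_mem g hz : g z ∈ Ici a)
  rcases hy.1.eq_or_lt with rfl | hby
  · refine (hg.continuousWithinAt_right_of_image_mem_nhdsWithin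
      (Ico_mem_nhdsGE hy.2) ?_).mono fun z hz => hz.1
    rw [himg]
    exact mem_of_superset self_mem_nhdsWithin (Ici_subset_Ici.2 (hga b hy))
  · have hlt : a < g y := (hga b ⟨le_rfl, hby.trans hy.2⟩).trans_lt
      (hg ⟨le_rfl, hby.trans hy.2⟩ hy hby)
    refine (hg.continuousAt_of_image_mem_nhds ?_ ?_).continuousWithinAt
    · exact mem_of_superset (Ioo_mem_nhds hby hy.2) Ioo_subset_Ico_self
    · rw [himg]
      exact Ici_mem_nhds hlt

section InverseOnHalfLine

variable {F : ℝ → ℝ} {a E : ℝ}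

theorem StrictMonoOn.lt_of_tendsto_atTop (hF : StrictMonoOn F (Ici a))
    (hlim : Tendsto F atTop (𝓝 E)) {t : ℝ} (ht : t ∈ Ici a) : F t < E := by
  have ht1 : t + 1 ∈ Ici a := mem_Ici.2 (by linarith [mem_Ici.1 ht])
  refine (hF ht ht1 (by linarith)).trans_le (ge_of_tendsto hlim ?_)
  filter_upwards [eventually_ge_atTop (t + 1)] with u hu
  exact (hF.le_iff_le ht1 (mem_Ici.2 ((mem_Ici.1 ht1).trans hu))).2 hu

theorem bijOn_Ici_Ico_of_tendsto_atTop (hF : StrictMonoOn F (Ici a))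
    (hcont : ContinuousOn F (Ici a)) (hlim : Tendsto F atTop (𝓝 E)) :
    BijOn F (Ici a) (Ico (F a) E) := by
  refine ⟨fun t ht => ⟨(hF.le_iff_le self_mem_Ici ht).2 ht, hF.lt_of_tendsto_atTop hlim ht⟩,
    hF.injOn, fun y hy => ?_⟩
  obtain ⟨T, hyT, hT⟩ := ((hlim.eventually (eventually_gt_nhds hy.2)).and
    (eventually_ge_atTop a)).exists
  exact hcont.surjOn_Icc self_mem_Ici (mem_Ici.2 hT) ⟨hy.1, hyT.le⟩

theorem exists_inverse_of_tendsto_atTop (hF : StrictMonoOn F (Ici a))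
    (hcont : ContinuousOn F (Ici a)) (hlim : Tendsto F atTop (𝓝 E)) :
    ∃ Finv : ℝ → ℝ,
      ContinuousOn Finv (Ico (F a) E) ∧
      StrictMonoOn Finv (Ico (F a) E) ∧
      (∀ s ∈ Ico (F a) E, a ≤ Finv s ∧ F (Finv s) = s) ∧
      Tendsto Finv (𝓝[<] E) atTop := by
  have hbij := bijOn_Ici_Ico_of_tendsto_atTop hF hcont hlim
  have hinv := hbij.invOn_invFunOn
  set Finv := Function.invFunOn F (Ici a)
  have hbij' : BijOn Finv (Ico (F a) E) (Ici a) :=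
    hinv.symm.bijOn hbij.surjOn.mapsTo_invFunOn hbij.mapsTo
  have hmono : StrictMonoOn Finv (Ico (F a) E) := fun y hy z hz hyz =>
    (hF.lt_iff_lt (hbij'.mapsTo hy) (hbij'.mapsTo hz)).1 (by rwa [hinv.2 hy, hinv.2 hz])
  refine ⟨Finv, hmono.continuousOn_Ico_of_image_eq_Ici hbij'.image_eq, hmono,
    fun s hs => ⟨hbij'.mapsTo hs, hinv.2 hs⟩, tendsto_atTop.2 fun M => ?_⟩
  set t := max M a
  have ht : t ∈ Ici a := mem_Ici.2 (le_max_right M a)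
  have hFt : F t ∈ Ico (F a) E := hbij.mapsTo ht
  filter_upwards [Ioo_mem_nhdsLT hFt.2] with s hs
  have hs' : s ∈ Ico (F a) E := ⟨hFt.1.trans hs.1.le, hs.2⟩
  calc M ≤ t := le_max_left M a
    _ = Finv (F t) := (hinv.1 ht).symm
    _ ≤ Finv s := (hmono.le_iff_le hFt hs').2 hs.1.le

end InverseOnHalfLine

theorem sum_range_sum_Icc_eq_sum_mul {R : Type*} [NonAssocSemiring R] (p : ℕ → R) (n : ℕ) :
    ∑ k ∈ Finset.range n, ∑ d ∈ Finset.Icc (k + 1) n, p d = ∑ d ∈ Finset.Icc 1 n, (d : R) * p d := by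
  rw [Finset.sum_comm' (t' := Finset.Icc 1 n) (s' := Finset.range) (fun k d => by simp; omega)]
  simp [Finset.sum_const, nsmul_eq_mul]

theorem sum_Icc_one_eq_sum_Icc_two {M : Type*} [AddCommMonoid M] {f : ℕ → M} (hf : f 1 = 0)
    (n : ℕ) : ∑ d ∈ Finset.Icc 1 n, f d = ∑ d ∈ Finset.Icc 2 n, f d := by
  refine (Finset.sum_subset (Finset.Icc_subset_Icc_left one_le_two) fun d hd hd' => ?_).symm
  obtain rfl : d = 1 := by simp only [Finset.mem_Icc] at hd hd'; omega
  exact hf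

theorem stmt6_general (Δ : ℕ) (p q : ℕ → ℝ)
    (hp0 : ∀ k, 0 ≤ p k)
    (hsupp : ∀ k, k < 2 ∨ Δ < k → p k = 0)
    (hsum : ∑ k ∈ Finset.Icc 2 Δ, p k = 1)
    (hq : ∀ k, q k = ∑ d ∈ Finset.Icc k Δ, p d)
    (lam lam' : ℝ → ℝ) (hlam0 : lam 0 = 0)
    (hode : ∀ t, HasDerivAt lam (lam' t) t)
    (hlam' : ∀ t, lam' t = Real.exp (-(lam t)) *
        ∑ k ∈ Finset.range Δ, lam t ^ k / (Nat.factorial k : ℝ) * q (k + 1))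
    (F : ℝ → ℝ) (hF : ∀ t, F t = ∫ s in Set.Ioc (0 : ℝ) t, (lam' s) ^ 2)
    (ED : ℝ) (hED : ED = ∑ k ∈ Finset.Icc 2 Δ, (k : ℝ) * p k) :
    ContinuousOn F (Set.Ici 0) ∧
    StrictMonoOn F (Set.Ici 0) ∧
    F 0 = 0 ∧
    Tendsto F atTop (nhds ED) ∧
    ∃ Finv : ℝ → ℝ,
      ContinuousOn Finv (Set.Ico 0 ED) ∧
      StrictMonoOn Finv (Set.Ico 0 ED) ∧
      (∀ s ∈ Set.Ico (0 : ℝ) ED, 0 ≤ Finv s ∧ F (Finv s) = s) ∧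
      Tendsto Finv (nhdsWithin ED (Set.Iio ED)) atTop := by
  have hΔ : 0 < Δ := Nat.pos_of_ne_zero (by rintro rfl; simp at hsum)
  have hp1 : p 1 = 0 := hsupp 1 (Or.inl one_lt_two)
  set c : ℕ → ℝ := fun k => q (k + 1)
  have hc : ∀ k, 0 ≤ c k := fun k => by
    simpa only [c, hq] using Finset.sum_nonneg fun d _ => hp0 d
  have hc0 : 0 < c 0 := by
    simp only [c, hq, sum_Icc_one_eq_sum_Icc_two hp1, hsum, zero_lt_one]
  have hcsum : ∑ k ∈ Finset.range Δ, c k = ED := by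
    simp only [c, hq, sum_range_sum_Icc_eq_sum_mul, hED]
    exact sum_Icc_one_eq_sum_Icc_two (by simp [hp1]) Δ
  have hode' : ∀ t, lam' t = poissonWeightedSum Δ c (lam t) := hlam'
  have hFeq : EqOn (poissonTailSum Δ c ∘ lam) F (Ici 0) := fun t ht => by
    rw [hF, ← intervalIntegral.integral_of_le ht, integral_sq_deriv_of_autonomous
      (fun x => hasDerivAt_poissonTailSum x) continuous_poissonWeightedSum hode hode', hlam0,
      poissonTailSum_zero_right, sub_zero, Function.comp_apply]
  have hmono : StrictMonoOn F (Ici 0) :=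
    (strictMonoOn_poissonTailSum_comp hΔ hc hc0 hode hode' hlam0.ge).congr hFeq
  have hlam : Continuous lam := continuous_iff_continuousAt.2 fun t => (hode t).continuousAt
  have hcont : ContinuousOn F (Ici 0) :=
    (continuous_poissonTailSum.comp hlam).continuousOn.congr hFeq.symm
  have hF0 : F 0 = 0 := by simp [hF]
  have hlim : Tendsto F atTop (𝓝 ED) :=
    hcsum ▸ (tendsto_poissonTailSum_atTop.comp (tendsto_atTop_of_poissonODE hΔ hc hc0 hode hode'
      hlam0.ge)).congr' (eventuallyEq_of_mem (Ici_mem_atTop 0) hFeq)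
  refine ⟨hcont, hmono, hF0, hlim, ?_⟩
  simpa only [hF0] using exists_inverse_of_tendsto_atTop hmono hcont hlim

/-- F(t) := ∫_0^t (λ'(s))² ds is continuous, strictly increasing on ℝ≥0, F(0)=0,
tends to E(D) = Σ k p_k at infinity, and admits a continuous strictly increasing
inverse F⁻¹ : [0, E(D)) → ℝ≥0 with F⁻¹(s) → ∞ as s → E(D)⁻. -/
theorem stmt6 (Δ : ℕ) (hΔ : 2 ≤ Δ) (p q : ℕ → ℝ)
    (hp0 : ∀ k, 0 ≤ p k)
    (hsupp : ∀ k, k < 2 ∨ Δ < k → p k = 0)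
    (hsum : ∑ k ∈ Finset.Icc 2 Δ, p k = 1)
    (hq : ∀ k, q k = ∑ d ∈ Finset.Icc k Δ, p d)
    (lam lam' : ℝ → ℝ) (hlam0 : lam 0 = 0)
    (hode : ∀ t, HasDerivAt lam (lam' t) t)
    (hlam' : ∀ t, lam' t = Real.exp (-(lam t)) *
        ∑ k ∈ Finset.range Δ, lam t ^ k / (Nat.factorial k : ℝ) * q (k + 1))
    (F : ℝ → ℝ) (hF : ∀ t, F t = ∫ s in Set.Ioc (0 : ℝ) t, (lam' s) ^ 2)
    (ED : ℝ) (hED : ED = ∑ k ∈ Finset.Icc 2 Δ, (k : ℝ) * p k) :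
    ContinuousOn F (Set.Ici 0) ∧
    StrictMonoOn F (Set.Ici 0) ∧
    F 0 = 0 ∧
    Tendsto F atTop (nhds ED) ∧
    ∃ Finv : ℝ → ℝ,
      ContinuousOn Finv (Set.Ico 0 ED) ∧
      StrictMonoOn Finv (Set.Ico 0 ED) ∧
      (∀ s ∈ Set.Ico (0 : ℝ) ED, 0 ≤ Finv s ∧ F (Finv s) = s) ∧
      Tendsto Finv (nhdsWithin ED (Set.Iio ED)) atTop :=
  stmt6_general Δ p q hp0 hsupp hsum hq lam lam' hlam0 hode hlam' F hF ED hED
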